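/- Let a_{ij} ∈ ℝ and signs h_{ij} ∈ {−1, +1} be given for every edge (i,j) ∈ E, and let Δ be the n×n real matrix with Δ_{ij} = −h_{ij} a_{ij} for i ≠ j and Δ_{ii} = Σ_{j≠i} a_{ij}. Then det Δ_[m] = Σ_F 2^{|𝒞(F)|} a_F, where the sum runs over all cycle-and-well-rooted spanning forests F ∈ ℱ→_m all of whose cycles c are negative, i.e., satisfy h_c = −1 (forests having a positive cycle contribute 0). -/

import Mathlib

/-!
Expanding each row of `Δ_[m]` as `∑_{k ≠ i} a_{ik} (e_i - h_{ik} e_k)` and using multilinearity,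
`det Δ_[m] = ∑_F a_F det (1 - H_F)`, where `H_F` carries `h_{i,F(i)}` at `(i, F(i))` when
`F(i) ∈ U`. For any function `g` with weights `w`, `det (1 - D_w A_g) = ∏_c (1 - w_c)` over the
cycles `c` of `g`: a vertex without preimage has a unit column and can be deleted, and adding
suitable multiples of the rows along a cycle to the row of its first vertex telescopes that row
to `(1 - w_c) e_x`, splitting off the factor and deleting `x`. Since `h_c = ±1`, the factor
`1 - h_c` is `2` on negative cycles and `0` on positive ones.
-/

open Finset Function

/-- Ordered product of the edge values along the path `x, g x, g^[2] x, …, g^[r] x`. -/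
def pathProd {V H : Type*} [Ring H] (h : V → V → H) (g : V → V) (x : V) (r : ℕ) : H :=
  ((List.range r).map fun t => h (g^[t] x) (g^[t + 1] x)).prod

/-- `x` is the canonical (`enc`-minimal) point on a nontrivial cycle of `g`. -/
def IsCycleRep {V : Type*} (enc : V → ℕ) (g : V → V) (x : V) : Prop :=
  2 ≤ minimalPeriod g x ∧ ∀ t : ℕ, enc x ≤ enc (g^[t] x)

/-- The canonical representatives of the (nontrivial) cycles of `g`. -/
noncomputable def cycleReps {V : Type*} [Fintype V] (enc : V → ℕ) (g : V → V) : Finset V :=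
  @Finset.filter V (IsCycleRep enc g) (Classical.decPred _) Finset.univ

/-- Extension of `f : U → V` to all of `V = {1,…,n}`, fixing the well pointwise. -/
def extFun {n m : ℕ} (hmn : m ≤ n) (f : Fin m → Fin n) : Fin n → Fin n :=
  fun j => if h : (j : ℕ) < m then f ⟨(j : ℕ), h⟩ else j

open Matrix

namespace Finset

variable {W : Type*} [DecidableEq W]

def eraseInclusion (s : Finset W) (x : W) : s.erase x → s :=
  fun i => ⟨i, mem_of_mem_erase i.2⟩

def eraseEquivSubtypeNe (s : Finset W) (x : W) : s.erase x ≃ {i : s // (i : W) ≠ x} where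
  toFun i := ⟨s.eraseInclusion x i, ne_of_mem_erase i.2⟩
  invFun i := ⟨i, mem_erase.2 ⟨i.2, i.1.2⟩⟩

end Finset

section DetErase

variable {W R : Type*} [DecidableEq W] [CommRing R] {s : Finset W} {x : W}

theorem det_eq_det_submatrix_erase_of_row (hx : x ∈ s) (M : Matrix s s R)
    (hrow : ∀ j, M ⟨x, hx⟩ j = if (j : W) = x then 1 else 0) :
    M.det = (M.submatrix (s.eraseInclusion x) (s.eraseInclusion x)).det := by
  have hblock : ∀ i : s, (i : W) = x → ∀ j : s, ¬(j : W) = x → M i j = 0 := by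
    rintro ⟨i, hi⟩ rfl j hj
    simpa [hj] using hrow j
  let : Unique {i : s // (i : W) = x} :=
    ⟨⟨⟨⟨x, hx⟩, rfl⟩⟩, fun i => Subtype.ext (Subtype.ext i.2)⟩
  rw [twoBlockTriangular_det' M _ hblock, det_unique (M.toSquareBlockProp _),
    ← det_submatrix_equiv_self (s.eraseEquivSubtypeNe x)]
  have hxx : M ⟨x, hx⟩ ⟨x, hx⟩ = 1 := by simpa using hrow ⟨x, hx⟩
  rw [show M.toSquareBlockProp (fun a => (a : W) = x) default default = 1 from hxx, one_mul]
  rfl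

theorem det_eq_det_submatrix_erase_of_col (hx : x ∈ s) (M : Matrix s s R)
    (hcol : ∀ i, M i ⟨x, hx⟩ = if (i : W) = x then 1 else 0) :
    M.det = (M.submatrix (s.eraseInclusion x) (s.eraseInclusion x)).det := by
  rw [← det_transpose, det_eq_det_submatrix_erase_of_row hx Mᵀ hcol, ← transpose_submatrix,
    det_transpose]

end DetErase

theorem det_eq_sum_piFinset_of_row_eq_sum {ι κ R : Type*} [Fintype ι] [DecidableEq ι]
    [DecidableEq κ] [CommRing R] (M : Matrix ι ι R) (A : ι → Finset κ) (c : ι → κ → R)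
    (v : ι → κ → ι → R) (hM : ∀ i, M i = ∑ k ∈ A i, c i k • v i k) :
    M.det = ∑ r ∈ Fintype.piFinset A, (∏ i, c i (r i)) * (of fun i => v i (r i)).det := by
  rw [funext hM]
  exact (detRowAlternating.toMultilinearMap.map_sum_finset _ A).trans
    (sum_congr rfl fun r _ => detRowAlternating.toMultilinearMap.map_smul_univ _ _)

theorem prod_eq_one_or_eq_neg_one {ι M : Type*} [CommMonoid M] [HasDistribNeg M]
    {s : Finset ι} {F : ι → M} (hF : ∀ i ∈ s, F i = 1 ∨ F i = -1) :
    ∏ i ∈ s, F i = 1 ∨ ∏ i ∈ s, F i = -1 := by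
  induction s using Finset.cons_induction with
  | empty => simp
  | cons i s hi ih =>
    rw [prod_cons]
    rcases hF i (mem_cons_self i s) with h | h <;>
      rcases ih fun j hj => hF j (mem_cons_of_mem hj) with h' | h' <;> simp [h, h']

theorem prod_one_sub_eq_ite {ι R : Type*} [CommRing R] {s : Finset ι} {F : ι → R}
    (hF : ∀ i ∈ s, F i = 1 ∨ F i = -1) [Decidable (∀ i ∈ s, F i = -1)] :
    ∏ i ∈ s, (1 - F i) = if ∀ i ∈ s, F i = -1 then 2 ^ #s else 0 := by
  split_ifs with hneg
  · rw [prod_congr rfl fun i hi => by rw [hneg i hi, sub_neg_eq_add, one_add_one_eq_two],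
      prod_const]
  · push Not at hneg
    obtain ⟨i, hi, hne⟩ := hneg
    exact prod_eq_zero hi (by rw [(hF i hi).resolve_right hne, sub_self])


section FunctionalMatrix

variable {W R : Type*} [CommRing R] (g : W → W) (w : W → R)

def oneSubFunMatrix [DecidableEq W] (s : Finset W) : Matrix s s R :=
  of fun i j => (if (i : W) = j then 1 else 0) - if g i = j then w i else 0

noncomputable def cycleWeight (x : W) : R :=
  ∏ t ∈ range (minimalPeriod g x), w (g^[t] x)

open scoped Classical in
noncomputable def cycleMinsIn [LinearOrder W] (s : Finset W) : Finset W :=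
  {x ∈ s | x ∈ periodicPts g ∧ (∀ t, g^[t] x ∈ s) ∧ ∀ t, x ≤ g^[t] x}

variable {g}

theorem mem_cycleMinsIn [LinearOrder W] {s : Finset W} {x : W} :
    x ∈ cycleMinsIn g s ↔ x ∈ periodicPts g ∧ (∀ t, g^[t] x ∈ s) ∧ ∀ t, x ≤ g^[t] x := by
  classical
  unfold cycleMinsIn
  rw [mem_filter, and_iff_right_iff_imp]
  exact fun hx => hx.2.1 0

theorem cycleMinsIn_mono [LinearOrder W] {s s' : Finset W} (h : s ⊆ s') :
    cycleMinsIn g s ⊆ cycleMinsIn g s' := by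
  intro x hx
  rw [mem_cycleMinsIn] at hx ⊢
  exact ⟨hx.1, fun t => h (hx.2.1 t), hx.2.2⟩

theorem cycleMinsIn_nonempty [LinearOrder W] {s : Finset W} {x : W} (hx : x ∈ periodicPts g)
    (horb : ∀ t, g^[t] x ∈ s) : (cycleMinsIn g s).Nonempty := by
  classical
  set T := {y ∈ s | y ∈ periodicPts g ∧ ∀ t, g^[t] y ∈ s}
  have hT : T.Nonempty := ⟨x, mem_filter.2 ⟨horb 0, hx, horb⟩⟩
  have hiter : ∀ y ∈ T, ∀ t, g^[t] y ∈ T := by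
    intro y hy t
    obtain ⟨-, hyp, hyorb⟩ := mem_filter.1 hy
    refine mem_filter.2 ⟨hyorb t, (bijOn_periodicPts (f := g)).mapsTo.iterate t hyp, fun t' => ?_⟩
    rw [← iterate_add_apply]
    exact hyorb _
  obtain ⟨-, hper, horb'⟩ := mem_filter.1 (T.min'_mem hT)
  exact ⟨T.min' hT, mem_cycleMinsIn.2
    ⟨hper, horb', fun t => T.min'_le _ (hiter _ (T.min'_mem hT) t)⟩⟩

end FunctionalMatrix

section FunctionalMatrixDet

variable {W R : Type*} [CommRing R] {g : W → W} {w : W → R} {s : Finset W} {x : W}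

theorem exists_mem_periodicPts_of_surjOn [DecidableEq W] (hs : s.Nonempty)
    (hsurj : Set.SurjOn g s s) : ∃ x ∈ periodicPts g, ∀ t, g^[t] x ∈ s := by
  have himage : s.image g = s :=
    (eq_of_subset_of_card_le (fun x hx => mem_image.2 (hsurj hx)) card_image_le).symm
  have hmaps : Set.MapsTo g s s := fun y hy => himage ▸ mem_image_of_mem g hy
  have hinj : Injective (hmaps.restrict g s s) :=
    Finite.injective_iff_surjective.2 fun y => by
      obtain ⟨z, hz, hzy⟩ := hsurj y.2
      exact ⟨⟨z, hz⟩, Subtype.ext hzy⟩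
  obtain ⟨x, hx⟩ := hs
  have hval : Semiconj ((↑) : s → W) (hmaps.restrict g s s) g := fun _ => rfl
  exact ⟨x, hval.mapsTo_periodicPts (hinj.mem_periodicPts ⟨x, hx⟩),
    fun t => hmaps.iterate t hx⟩

theorem det_oneSubFunMatrix_of_forall_ne [DecidableEq W] (hx : x ∈ s)
    (hpre : ∀ y ∈ s, g y ≠ x) :
    (oneSubFunMatrix g w s).det = (oneSubFunMatrix g w (s.erase x)).det := by
  refine det_eq_det_submatrix_erase_of_col hx _ fun i => ?_
  change (if (i : W) = x then (1 : R) else 0) - (if g i = x then w i else 0) = _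
  rw [if_neg (hpre i i.2), sub_zero]

theorem sum_orbit_smul_row_oneSubFunMatrix [DecidableEq W] (horb : ∀ t, g^[t] x ∈ s) :
    ∑ k ∈ range (minimalPeriod g x),
        (∏ t ∈ range k, w (g^[t] x)) • oneSubFunMatrix g w s ⟨g^[k] x, horb k⟩ =
      (1 - cycleWeight g w x) • fun j : s => if (j : W) = x then 1 else 0 := by
  ext j
  set P : ℕ → R := fun k => ∏ t ∈ range k, w (g^[t] x)
  have hterm : ∀ k, P k * oneSubFunMatrix g w s ⟨g^[k] x, horb k⟩ j =
      P k * (if g^[k] x = j then 1 else 0) - P (k + 1) * (if g^[k + 1] x = j then 1 else 0) := by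
    intro k
    simp only [oneSubFunMatrix, of_apply, P, prod_range_succ, iterate_succ_apply']
    split_ifs <;> ring
  simp only [Finset.sum_apply, Pi.smul_apply, smul_eq_mul, hterm, sum_range_sub', cycleWeight, P]
  rw [iterate_minimalPeriod]
  by_cases hj : (j : W) = x
  · simp [hj]
  · simp [hj, Ne.symm hj]

theorem det_oneSubFunMatrix_of_mem_periodicPts [DecidableEq W] (hx : x ∈ periodicPts g)
    (horb : ∀ t, g^[t] x ∈ s) :
    (oneSubFunMatrix g w s).det =
      (1 - cycleWeight g w x) * (oneSubFunMatrix g w (s.erase x)).det := by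
  set M := oneSubFunMatrix g w s
  have hxs : x ∈ s := horb 0
  have hr : 0 < minimalPeriod g x := minimalPeriod_pos_of_mem_periodicPts hx
  let orb : ℕ → s := fun k => ⟨g^[k] x, horb k⟩
  let c : s → R := fun y =>
    ∑ k ∈ range (minimalPeriod g x), if orb k = y then ∏ t ∈ range k, w (g^[t] x) else 0
  have hcomb : ∑ y, c y • M y =
      (1 - cycleWeight g w x) • fun j : s => if (j : W) = x then 1 else 0 := by
    rw [← sum_orbit_smul_row_oneSubFunMatrix horb]
    simp only [c, sum_smul, ite_smul, zero_smul]
    rw [sum_comm]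
    exact sum_congr rfl fun k _ => Fintype.sum_ite_eq _ _
  have hcx : c ⟨x, hxs⟩ = 1 := by
    refine (sum_eq_single 0 (fun k hk hk0 => if_neg fun h => hk0 ?_) (by simp [hr])).trans ?_
    · exact (iterate_eq_iterate_iff_of_lt_minimalPeriod (mem_range.1 hk) hr).1
        (congrArg Subtype.val h)
    · simp [orb]
  have hrow := det_updateRow_sum M ⟨x, hxs⟩ c
  rw [hcx, one_smul, hcomb, det_updateRow_smul] at hrow
  rw [← hrow, det_eq_det_submatrix_erase_of_row hxs _ fun j => congrFun updateRow_self j]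
  congr 2
  ext i j
  rw [submatrix_apply, updateRow_ne fun h => ne_of_mem_erase i.2 (congrArg Subtype.val h)]
  rfl

end FunctionalMatrixDet

section CycleExpansion

variable {W R : Type*} [CommRing R] [LinearOrder W] {g : W → W} {s : Finset W} {x : W}

theorem cycleMinsIn_eq_insert (hx : x ∈ cycleMinsIn g s) :
    cycleMinsIn g s = insert x (cycleMinsIn g (s.erase x)) := by
  refine Subset.antisymm (fun z hz => ?_)
    (insert_subset hx (cycleMinsIn_mono (erase_subset x s)))
  obtain ⟨hxper, -, hxmin⟩ := mem_cycleMinsIn.1 hx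
  obtain ⟨hzper, hzorb, hzmin⟩ := mem_cycleMinsIn.1 hz
  rcases eq_or_ne z x with rfl | hzx
  · exact mem_insert_self z _
  refine mem_insert_of_mem (mem_cycleMinsIn.2 ⟨hzper, fun t => mem_erase.2 ⟨?_, hzorb t⟩, hzmin⟩)
  rintro hzt
  -- `x` and `z` lie on the same cycle, and both are its minimum
  have hback : ∃ t', g^[t'] x = z := by
    rw [← hzt, ← mem_periodicOrbit_iff ((bijOn_periodicPts (f := g)).mapsTo.iterate t hzper),
      periodicOrbit_apply_iterate_eq hzper]
    exact self_mem_periodicOrbit hzper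
  obtain ⟨t', ht'⟩ := hback
  exact hzx (le_antisymm (hzt ▸ hzmin t) (ht' ▸ hxmin t'))

theorem det_oneSubFunMatrix (w : W → R) (s : Finset W) :
    (oneSubFunMatrix g w s).det = ∏ x ∈ cycleMinsIn g s, (1 - cycleWeight g w x) := by
  induction s using Finset.strongInduction with
  | H s ih =>
  obtain ⟨x, hx⟩ | hempty := (cycleMinsIn g s).eq_empty_or_nonempty.symm
  · obtain ⟨hxper, hxorb, -⟩ := mem_cycleMinsIn.1 hx
    have hxs : x ∈ s := hxorb 0
    have hx_notMem : x ∉ cycleMinsIn g (s.erase x) :=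
      fun h => s.notMem_erase x ((mem_cycleMinsIn.1 h).2.1 0)
    rw [det_oneSubFunMatrix_of_mem_periodicPts hxper hxorb, ih _ (erase_ssubset hxs),
      cycleMinsIn_eq_insert hx, prod_insert hx_notMem]
  rcases s.eq_empty_or_nonempty with rfl | hs
  · simp [hempty]
  obtain ⟨x, hxs, hpre⟩ : ∃ x ∈ s, ∀ y ∈ s, g y ≠ x := by
    by_contra! h
    obtain ⟨y, hy, horb⟩ := exists_mem_periodicPts_of_surjOn hs fun x hx => h x hx
    exact (cycleMinsIn_nonempty hy horb).ne_empty hempty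
  have hempty' : cycleMinsIn g (s.erase x) = ∅ :=
    subset_empty.1 (hempty ▸ cycleMinsIn_mono (erase_subset x s))
  rw [det_oneSubFunMatrix_of_forall_ne hxs hpre, ih _ (erase_ssubset hxs), hempty, hempty']

end CycleExpansion

theorem pathProd_eq_prod {V H : Type*} [CommRing H] (h : V → V → H) (g : V → V) (x : V)
    (r : ℕ) : pathProd h g x r = ∏ t ∈ range r, h (g^[t] x) (g^[t + 1] x) := by
  induction r with
  | zero => rfl
  | succ r ih =>
    rw [pathProd, List.range_succ, List.map_append, List.prod_append, ← pathProd, ih,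
      prod_range_succ, List.map_singleton, List.prod_singleton]

theorem cycleWeight_eq_pathProd {V H : Type*} [CommRing H] (h : V → V → H) (g : V → V) (x : V) :
    cycleWeight g (fun v => h v (g v)) x = pathProd h g x (minimalPeriod g x) := by
  simp only [cycleWeight, pathProd_eq_prod, iterate_succ_apply']

theorem not_isFixedPt_iterate_of_two_le_minimalPeriod {V : Type*} {g : V → V} {x : V}
    (hx : 2 ≤ minimalPeriod g x) (t : ℕ) : ¬IsFixedPt g (g^[t] x) := by
  have hper : x ∈ periodicPts g := minimalPeriod_pos_iff_mem_periodicPts.1 (by omega)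
  rw [← minimalPeriod_eq_one_iff_isFixedPt, minimalPeriod_apply_iterate hper]
  omega

theorem pathProd_eq_one_or_eq_neg_one {V H : Type*} [CommRing H] {h : V → V → H}
    (hsign : ∀ i j, i ≠ j → h i j = 1 ∨ h i j = -1) {g : V → V} {x : V}
    (hx : 2 ≤ minimalPeriod g x) :
    pathProd h g x (minimalPeriod g x) = 1 ∨ pathProd h g x (minimalPeriod g x) = -1 := by
  rw [pathProd_eq_prod]
  refine prod_eq_one_or_eq_neg_one fun t _ => hsign _ _ fun heq => ?_
  refine not_isFixedPt_iterate_of_two_le_minimalPeriod hx t ?_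
  rw [IsFixedPt, ← iterate_succ_apply' g, ← heq]

theorem mem_cycleReps {V : Type*} [Fintype V] {enc : V → ℕ} {g : V → V} {x : V} :
    x ∈ cycleReps enc g ↔ IsCycleRep enc g x := by
  classical
  simp [cycleReps]

section SignedForest

variable {n m : ℕ} (hmn : m ≤ n) {f : Fin m → Fin n}

theorem extFun_castLE (i : Fin m) : extFun hmn f (Fin.castLE hmn i) = f i :=
  dif_pos i.2

theorem isFixedPt_extFun_iff (hf : ∀ i, f i ≠ Fin.castLE hmn i) (v : Fin n) :
    IsFixedPt (extFun hmn f) v ↔ m ≤ v := by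
  by_cases hv : (v : ℕ) < m
  · simp only [IsFixedPt, extFun, dif_pos hv, not_le.2 hv, iff_false]
    exact hf ⟨v, hv⟩
  · simp only [IsFixedPt, extFun, dif_neg hv, not_lt.1 hv]

theorem cycleMinsIn_extFun (hf : ∀ i, f i ≠ Fin.castLE hmn i) :
    cycleMinsIn (extFun hmn f) {v | (v : ℕ) < m} = cycleReps Fin.val (extFun hmn f) := by
  ext z
  simp only [mem_cycleMinsIn, cycleReps, IsCycleRep, mem_filter, mem_univ, true_and,
    Fin.le_def]
  rw [← and_assoc]
  refine and_congr_left fun _ => ⟨fun ⟨hper, horb⟩ => ?_, fun h2 => ⟨?_, fun t => ?_⟩⟩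
  · have hz : ¬IsFixedPt (extFun hmn f) z := by
      simpa [isFixedPt_extFun_iff hmn hf] using horb 0
    have := minimalPeriod_pos_of_mem_periodicPts hper
    have := mt minimalPeriod_eq_one_iff_isFixedPt.1 hz
    omega
  · exact minimalPeriod_pos_iff_mem_periodicPts.1 (by omega)
  · simpa [isFixedPt_extFun_iff hmn hf] using not_isFixedPt_iterate_of_two_le_minimalPeriod h2 t

end SignedForest

section SignedLaplacian

variable {n m : ℕ} (hmn : m ≤ n) {R : Type*} [CommRing R]

def signedLaplacian (a h : Fin n → Fin n → R) : Matrix (Fin n) (Fin n) R :=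
  of fun i j => if i = j then ∑ k ∈ univ.filter fun k => k ≠ i, a i k else -(h i j * a i j)

def signedForestMatrix (h : Fin n → Fin n → R) (f : Fin m → Fin n) : Matrix (Fin m) (Fin m) R :=
  of fun i j => (if i = j then 1 else 0) -
    if f i = Fin.castLE hmn j then h (Fin.castLE hmn i) (f i) else 0

theorem det_signedForestMatrix (h : Fin n → Fin n → R) {f : Fin m → Fin n}
    (hf : ∀ i, f i ≠ Fin.castLE hmn i) :
    (signedForestMatrix hmn h f).det = ∏ x ∈ cycleReps Fin.val (extFun hmn f),
      (1 - pathProd h (extFun hmn f) x (minimalPeriod (extFun hmn f) x)) := by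
  let e : Fin m ≃ ({v | (v : ℕ) < m} : Finset (Fin n)) :=
    (Fin.castLEquiv hmn).trans (Equiv.subtypeEquivRight fun v => by simp)
  have hreindex : signedForestMatrix hmn h f =
      (oneSubFunMatrix (extFun hmn f) (fun v => h v (extFun hmn f v)) _).submatrix e e := by
    ext i j
    simp [signedForestMatrix, oneSubFunMatrix, e, extFun_castLE]
  rw [hreindex, det_submatrix_equiv_self, det_oneSubFunMatrix, cycleMinsIn_extFun hmn hf]
  simp only [cycleWeight_eq_pathProd]

theorem det_signedLaplacian_submatrix (a h : Fin n → Fin n → R) :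
    ((signedLaplacian a h).submatrix (Fin.castLE hmn) (Fin.castLE hmn)).det =
      ∑ f : {f : Fin m → Fin n // ∀ i, f i ≠ Fin.castLE hmn i},
        (∏ i, a (Fin.castLE hmn i) (f.1 i)) * (signedForestMatrix hmn h f.1).det := by
  rw [det_eq_sum_piFinset_of_row_eq_sum _ (fun i => univ.filter fun k => k ≠ Fin.castLE hmn i)
    (fun i k => a (Fin.castLE hmn i) k)
    (fun i k => signedForestMatrix hmn h (fun _ => k) i)]
  · exact sum_subtype _ (fun f => by simp [Fintype.mem_piFinset]) _
  · intro i
    ext j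
    by_cases hij : i = j
    · subst hij
      simp only [signedLaplacian, signedForestMatrix, submatrix_apply, of_apply, if_true,
        Finset.sum_apply, Pi.smul_apply, smul_eq_mul]
      refine sum_congr rfl fun k hk => ?_
      rw [if_neg (mem_filter.1 hk).2, sub_zero, mul_one]
    · simp [signedLaplacian, signedForestMatrix, hij, Ne.symm hij, Fin.castLE_inj,
        Finset.sum_apply, mul_comm]

end SignedLaplacian

theorem stmt10_general (n m : ℕ) (hmn : m ≤ n)
    (a : Fin n → Fin n → ℝ) (h : Fin n → Fin n → ℝ)
    (hsign : ∀ i j : Fin n, i ≠ j → h i j = 1 ∨ h i j = -1) :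
    Matrix.det
      ((Matrix.of fun i j : Fin n =>
          if i = j then ∑ k ∈ Finset.univ.filter fun k => k ≠ i, a i k
          else - (h i j * a i j)).submatrix (Fin.castLE hmn) (Fin.castLE hmn)) =
    ∑ f ∈ @Finset.filter {f : Fin m → Fin n // ∀ i, f i ≠ Fin.castLE hmn i}
        (fun f => ∀ x ∈ cycleReps Fin.val (extFun hmn f.1),
          pathProd h (extFun hmn f.1) x (minimalPeriod (extFun hmn f.1) x) = -1)
        (Classical.decPred _) Finset.univ,
      2 ^ (cycleReps Fin.val (extFun hmn f.1)).card *
        ∏ i : Fin m, a (Fin.castLE hmn i) (f.1 i) := by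
  rw [← signedLaplacian, det_signedLaplacian_submatrix, sum_filter]
  refine sum_congr rfl fun f _ => ?_
  rw [det_signedForestMatrix hmn h f.2, prod_one_sub_eq_ite fun x hx =>
    pathProd_eq_one_or_eq_neg_one hsign (mem_cycleReps.1 hx).1]
  split_ifs <;> ring

theorem stmt10 (n m : ℕ) (hn : 2 ≤ n) (hm : 1 ≤ m) (hmn : m ≤ n)
    (a : Fin n → Fin n → ℝ) (h : Fin n → Fin n → ℝ)
    (hsign : ∀ i j : Fin n, i ≠ j → h i j = 1 ∨ h i j = -1) :
    Matrix.det
      ((Matrix.of fun i j : Fin n =>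
          if i = j then ∑ k ∈ Finset.univ.filter fun k => k ≠ i, a i k
          else - (h i j * a i j)).submatrix (Fin.castLE hmn) (Fin.castLE hmn)) =
    ∑ f ∈ @Finset.filter {f : Fin m → Fin n // ∀ i, f i ≠ Fin.castLE hmn i}
        (fun f => ∀ x ∈ cycleReps Fin.val (extFun hmn f.1),
          pathProd h (extFun hmn f.1) x (minimalPeriod (extFun hmn f.1) x) = -1)
        (Classical.decPred _) Finset.univ,
      2 ^ (cycleReps Fin.val (extFun hmn f.1)).card *
        ∏ i : Fin m, a (Fin.castLE hmn i) (f.1 i) :=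
  stmt10_general n m hmn a h hsign
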